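/- arXiv:1307.2475 — 3 statements merged into one kernel-verified Lean document; each statement's English description precedes it below -/
import Mathlib

section
/- Let K be a compact group, π a strongly continuous isometric representation of K on a Banach space X, and m a finite signed Borel measure on K. Then ‖π(m)‖_{B(X)} ≤ ‖λ(m) ⊗ Id_X‖_{B(L²(K;X))}, where λ is the left regular representation of K on L²(K). -/
open MeasureTheory

/-- The normalized (probability) Haar measure on a compact group. -/
noncomputable def haarP (K : Type*) [Group K] [TopologicalSpace K] [IsTopologicalGroup K]
    [CompactSpace K] [T2Space K] [MeasurableSpace K] [BorelSpace K] : Measure K :=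
  ((Measure.haar : Measure K) Set.univ)⁻¹ • (Measure.haar : Measure K)

/-!
Test `λ(m) ⊗ Id_X` on the orbit function `F k = π(k⁻¹) ξ`, which has constant norm `‖ξ‖`.
Then `(λ(m) ⊗ Id_X) F` is `k ↦ π(k⁻¹) (π(m) ξ)`, of constant norm `‖π(m) ξ‖`, so the two
`L²(K;X)`-norms are `‖π(m) ξ‖` and `‖ξ‖`.
-/

instance isProbabilityMeasure_haarP (K : Type*) [Group K] [TopologicalSpace K]
    [IsTopologicalGroup K] [CompactSpace K] [T2Space K] [MeasurableSpace K] [BorelSpace K] :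
    IsProbabilityMeasure (haarP K) := by
  constructor
  rw [haarP, Measure.smul_apply, smul_eq_mul]
  exact ENNReal.inv_mul_cancel (isOpen_univ.measure_pos _ Set.univ_nonempty).ne'
    (measure_ne_top _ _)

-- `π k` is a continuous linear equivalence, and these commute with every Bochner integral.
theorem MonoidHom.integral_apply_mul_left {𝕜 G E : Type*} [RCLike 𝕜] [Group G]
    [MeasurableSpace G] [NormedAddCommGroup E] [NormedSpace 𝕜 E] [NormedSpace ℝ E]
    (π : G →* (E →L[𝕜] E)) (μ : Measure G) (ξ : E) (k : G) :
    ∫ g, π (k * g) ξ ∂μ = π k (∫ g, π g ξ ∂μ) := by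
  let πk : E ≃L[𝕜] E := ContinuousLinearEquiv.unitsEquiv 𝕜 E (π.toHomUnits k)
  simp only [map_mul, mul_apply_eq_comp]
  exact πk.integral_comp_comm (π · ξ)

theorem stmt3_general {K : Type*} [Group K] [TopologicalSpace K] [IsTopologicalGroup K]
    [CompactSpace K] [T2Space K] [MeasurableSpace K] [BorelSpace K]
    {X : Type*} [NormedAddCommGroup X] [NormedSpace ℂ X]
    (π : K →* (X →L[ℂ] X))
    (hcont : ∀ ξ : X, Continuous fun k => π k ξ)
    (hiso : ∀ (k : K) (ξ : X), ‖π k ξ‖ = ‖ξ‖)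
    (mp mm : Measure K)
    (B : ℝ) (hB : 0 ≤ B)
    (hconv : ∀ F : C(K, X),
      ∫ k, ‖(∫ g, F (g⁻¹ * k) ∂mp) - (∫ g, F (g⁻¹ * k) ∂mm)‖ ^ 2 ∂(haarP K)
        ≤ B ^ 2 * ∫ k, ‖F k‖ ^ 2 ∂(haarP K)) :
    ∀ ξ : X, ‖(∫ g, π g ξ ∂mp) - (∫ g, π g ξ ∂mm)‖ ≤ B * ‖ξ‖ := by
  intro ξ
  let F : C(K, X) := ⟨fun k => π k⁻¹ ξ, (hcont ξ).comp continuous_inv⟩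
  have hF_conv : ∀ k, (∫ g, F (g⁻¹ * k) ∂mp) - (∫ g, F (g⁻¹ * k) ∂mm)
      = π k⁻¹ ((∫ g, π g ξ ∂mp) - (∫ g, π g ξ ∂mm)) := fun k => by
    simp only [F, ContinuousMap.coe_mk, mul_inv_rev, inv_inv, π.integral_apply_mul_left, map_sub]
  have h := hconv F
  simp only [hF_conv] at h
  simp only [hiso, F, ContinuousMap.coe_mk, integral_const, probReal_univ, one_smul,
    ← mul_pow] at h
  exact abs_le_of_sq_le_sq' h (by positivity) |>.2

/-- let `K` be a compact group, `π` a strongly continuous isometric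
representation of `K` on a Banach space `X`, and `m = m₊ − m₋` a finite signed Borel
measure on `K`.  Then `‖π(m)‖_{B(X)} ≤ ‖λ(m) ⊗ Id_X‖_{B(L²(K;X))}`: for any constant
`B ≥ 0` dominating the vector-valued convolution operator `λ(m) ⊗ Id_X` (on the dense
set of continuous functions `F : K → X`, with respect to the `L²(K;X)`-norms for the
Haar probability measure), one has `‖π(m)ξ‖ ≤ B‖ξ‖` for every `ξ ∈ X`. -/
theorem stmt3 {K : Type*} [Group K] [TopologicalSpace K] [IsTopologicalGroup K]
    [CompactSpace K] [T2Space K] [MeasurableSpace K] [BorelSpace K]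
    {X : Type*} [NormedAddCommGroup X] [NormedSpace ℂ X] [CompleteSpace X]
    (π : K →* (X →L[ℂ] X))
    (hcont : ∀ ξ : X, Continuous fun k => π k ξ)
    (hiso : ∀ (k : K) (ξ : X), ‖π k ξ‖ = ‖ξ‖)
    (mp mm : Measure K) [IsFiniteMeasure mp] [IsFiniteMeasure mm]
    (B : ℝ) (hB : 0 ≤ B)
    (hconv : ∀ F : C(K, X),
      ∫ k, ‖(∫ g, F (g⁻¹ * k) ∂mp) - (∫ g, F (g⁻¹ * k) ∂mm)‖ ^ 2 ∂(haarP K)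
        ≤ B ^ 2 * ∫ k, ‖F k‖ ^ 2 ∂(haarP K)) :
    ∀ ξ : X, ‖(∫ g, π g ξ ∂mp) - (∫ g, π g ξ ∂mm)‖ ≤ B * ‖ξ‖ :=
  stmt3_general π hcont hiso mp mm B hB hconv
end

section
/- Let G be a locally compact group and π a strongly continuous representation of G on a Banach space X by bounded invertible operators. Then the set Y of functionals x ∈ X* such that the map g ↦ π(g⁻¹)* x is norm-continuous from G to X* is a norm-closed linear subspace of X*, is invariant under π(g⁻¹)* for all g ∈ G, and is weak-* dense in X*. -/
open NormedSpace

/-- The set of functionals `x ∈ X*` such that `g ↦ π(g⁻¹)* x` is norm-continuous. -/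
def contraSet {G : Type*} [Group G] [TopologicalSpace G]
    {X : Type*} [NormedAddCommGroup X] [NormedSpace ℂ X]
    (π : G →* (X ≃L[ℂ] X)) : Set (StrongDual ℂ X) :=
  {x | Continuous fun g : G => x.comp ((π g⁻¹ : X ≃L[ℂ] X) : X →L[ℂ] X)}

/-!
Banach–Steinhaus makes `g ↦ π(g⁻¹)` locally norm-bounded, so a norm limit of functionals in `Y`
is a locally uniform limit of continuous maps `G → X*`; hence `Y` is closed.

For density, smooth `x` against a bump `ψ ≥ 0` of Haar integral `1` supported near `1`: the
weak-* integral `y = ∫ ψ(g) π(g⁻¹)* x dg` satisfies `π(h⁻¹)* y = ∫ ψ(h⁻¹g) π(g⁻¹)* x dg` by left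
invariance, so the norm continuity of `h ↦ π(h⁻¹)* y` comes from the uniform continuity of the
translates of `ψ`, while `y` is close to `x` on any finite set of vectors because `ψ` is
concentrated where `π(g⁻¹)* x` is weak-* close to `x`.
-/

section

open MeasureTheory Filter Set Topology Function Pointwise

section Analysis

variable {𝕜 : Type*} [RCLike 𝕜] {E F H : Type*} [NormedAddCommGroup E] [NormedSpace 𝕜 E]
  [NormedAddCommGroup F] [NormedSpace 𝕜 F] [NormedAddCommGroup H] [NormedSpace 𝕜 H]

theorem IsCompact.exists_bound_of_continuous_apply {α : Type*} [TopologicalSpace α]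
    [CompleteSpace E] {T : α → E →L[𝕜] F} (hT : ∀ ξ, Continuous fun a => T a ξ) {K : Set α}
    (hK : IsCompact K) : ∃ C ≥ 0, ∀ a ∈ K, ‖T a‖ ≤ C := by
  obtain ⟨C, hC⟩ := banach_steinhaus (g := fun a : K => T a) fun ξ => by
    obtain ⟨C, hC⟩ := hK.exists_bound_of_continuousOn (hT ξ).continuousOn
    exact ⟨C, fun a => hC a a.2⟩
  exact ⟨max C 0, le_max_right _ _, fun a ha => (hC ⟨a, ha⟩).trans (le_max_left _ _)⟩

theorem isClosed_setOf_continuous_comp {α : Type*} [TopologicalSpace α] {T : α → E →L[𝕜] F}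
    (hT : ∀ a, ∃ V ∈ 𝓝 a, ∃ C, ∀ b ∈ V, ‖T b‖ ≤ C) :
    IsClosed {x : F →L[𝕜] H | Continuous fun a => x.comp (T a)} := by
  refine isClosed_of_closure_subset fun x hx =>
    continuous_of_locally_uniform_approx_of_continuousAt fun a u hu => ?_
  obtain ⟨ε, hε, hεu⟩ := Metric.mem_uniformity_dist.1 hu
  obtain ⟨V, hV, C, hC⟩ := hT a
  have hC' : 0 < |C| + 1 := by positivity
  obtain ⟨y, hy, hxy⟩ := Metric.mem_closure_iff.1 hx (ε / (|C| + 1)) (by positivity)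
  refine ⟨V, hV, fun b => y.comp (T b), hy.continuousAt, fun b hb => hεu ?_⟩
  rw [dist_eq_norm] at hxy ⊢
  calc ‖x.comp (T b) - y.comp (T b)‖ = ‖(x - y).comp (T b)‖ := by
        rw [ContinuousLinearMap.sub_comp]
    _ ≤ ‖x - y‖ * (|C| + 1) := (ContinuousLinearMap.opNorm_comp_le _ _).trans <|
        mul_le_mul_of_nonneg_left (by linarith [hC b hb, le_abs_self C]) (norm_nonneg _)
    _ < ε := (lt_div_iff₀ hC').1 hxy

theorem dense_toWeakDual_image_of_forall_finset {S : Set (StrongDual 𝕜 E)}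
    (h : ∀ x : StrongDual 𝕜 E, ∀ s : Finset E, ∀ ε > 0, ∃ y ∈ S, ∀ ξ ∈ s, ‖y ξ - x ξ‖ ≤ ε) :
    Dense (StrongDual.toWeakDual '' S) := by
  intro w
  choose y hyS hy using fun p : Finset E × ℕ =>
    h (StrongDual.toWeakDual.symm w) p.1 (1 / (p.2 + 1)) Nat.one_div_pos_of_nat
  refine mem_closure_of_tendsto (f := fun p => StrongDual.toWeakDual (y p)) (b := atTop ×ˢ atTop)
    ?_ (Eventually.of_forall fun p => mem_image_of_mem _ (hyS p))
  rw [tendsto_iff_forall_eval_tendsto_topDualPairing]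
  intro ξ
  refine tendsto_iff_norm_sub_tendsto_zero.2 <|
    squeeze_zero' (Eventually.of_forall fun _ => norm_nonneg _) ?_
    (tendsto_one_div_add_atTop_nhds_zero_nat.comp tendsto_snd)
  filter_upwards [(eventually_ge_atTop {ξ}).prod_inl atTop] with p hp
  exact hy p ξ (Finset.singleton_subset_iff.1 hp)

end Analysis

theorem HasCompactSupport.tendstoUniformly_comp_inv_mul {G β : Type*} [Group G]
    [TopologicalSpace G] [IsTopologicalGroup G] [UniformSpace β] [Zero β] {ψ : G → β}
    (hψs : HasCompactSupport ψ) (hψ : Continuous ψ) (h₀ : G) :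
    TendstoUniformly (fun h g => ψ (h⁻¹ * g)) (fun g => ψ (h₀⁻¹ * g)) (𝓝 h₀) := by
  let : UniformSpace G := IsTopologicalGroup.rightUniformSpace G
  intro u hu
  obtain ⟨V, hV, hVu⟩ := mem_comap.1 (hψs.uniformContinuous_of_continuous hψ hu)
  have hlim : Tendsto (fun h : G => h⁻¹ * h₀) (𝓝 h₀) (𝓝 1) := by
    simpa using (continuous_inv.mul continuous_const).tendsto (f := fun h : G => h⁻¹ * h₀) h₀
  filter_upwards [hlim hV] with h hh g
  exact @hVu (h₀⁻¹ * g, h⁻¹ * g) (by simpa [mul_assoc] using hh)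

theorem exists_continuous_hasCompactSupport_integral_eq_one {α : Type*} [TopologicalSpace α]
    [RegularSpace α] [LocallyCompactSpace α] [MeasurableSpace α] [OpensMeasurableSpace α]
    (μ : Measure α) [μ.IsOpenPosMeasure] [IsFiniteMeasureOnCompacts μ] {a : α} {U : Set α}
    (hU : U ∈ 𝓝 a) :
    ∃ ψ : α → ℝ, Continuous ψ ∧ HasCompactSupport ψ ∧ 0 ≤ ψ ∧ support ψ ⊆ U ∧
      ∫ x, ψ x ∂μ = 1 := by
  obtain ⟨φ, hφa, hφU, hφc, hφ01⟩ := exists_continuous_one_zero_of_isCompact isCompact_singleton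
    isOpen_interior.isClosed_compl
    (disjoint_compl_right_iff_subset.2 (singleton_subset_iff.2 (mem_interior_iff_mem_nhds.2 hU)))
  have hsupp : support φ ⊆ U := fun x hx => interior_subset (not_not.1 fun h => hx (hφU h))
  have hpos : 0 < ∫ x, φ x ∂μ := by
    rw [integral_pos_iff_support_of_nonneg (fun x => (hφ01 x).1)
      (φ.continuous.integrable_of_hasCompactSupport hφc)]
    exact (isOpen_ne_fun φ.continuous continuous_const).measure_pos μ ⟨a, by simp [hφa rfl]⟩
  refine ⟨fun x => (∫ x, φ x ∂μ)⁻¹ * φ x, by fun_prop, hφc.mul_left,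
    fun x => mul_nonneg (inv_nonneg.2 hpos.le) (hφ01 x).1,
    (support_mul_subset_right _ _).trans hsupp, ?_⟩
  rw [integral_const_mul, inv_mul_cancel₀ hpos.ne']

theorem norm_integral_smul_sub_le {α E : Type*} [MeasurableSpace α] {μ : Measure α}
    [NormedAddCommGroup E] [NormedSpace ℝ E] [CompleteSpace E] {ψ : α → ℝ} {f : α → E} {c : E}
    {ε : ℝ}
    (hψ0 : 0 ≤ ψ) (hψi : Integrable ψ μ) (hψ1 : ∫ x, ψ x ∂μ = 1)
    (hf : Integrable (fun x => ψ x • f x) μ) (hfc : ∀ x ∈ support ψ, ‖f x - c‖ ≤ ε) :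
    ‖(∫ x, ψ x • f x ∂μ) - c‖ ≤ ε := by
  have hsub : (∫ x, ψ x • f x ∂μ) - c = ∫ x, ψ x • (f x - c) ∂μ := by
    simp_rw [smul_sub]
    rw [integral_sub hf (hψi.smul_const c), integral_smul_const, hψ1, one_smul]
  rw [hsub]
  calc ‖∫ x, ψ x • (f x - c) ∂μ‖ ≤ ∫ x, ψ x * ε ∂μ :=
        norm_integral_le_of_norm_le (hψi.mul_const ε) (Eventually.of_forall fun x => ?_)
    _ = ε := by rw [integral_mul_const, hψ1, one_mul]
  by_cases hx : ψ x = 0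
  · simp [hx]
  · rw [norm_smul, Real.norm_of_nonneg (hψ0 x)]
    exact mul_le_mul_of_nonneg_left (hfc x hx) (hψ0 x)

section WeakIntegral

variable {𝕜 : Type*} [RCLike 𝕜] {E : Type*} [NormedAddCommGroup E] [NormedSpace 𝕜 E]
  {α : Type*} [MeasurableSpace α] {μ : Measure α}

theorem norm_integral_smul_apply_le {Φ : α → StrongDual 𝕜 E} {φ : α → ℝ} {Q : Set α} {δ C : ℝ}
    (hQ : MeasurableSet Q) (hQμ : μ Q ≠ ⊤) (hφQ : support φ ⊆ Q) (hφ : ∀ x, |φ x| ≤ δ)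
    (hΦ : ∀ x ∈ Q, ‖Φ x‖ ≤ C) (ξ : E) :
    ‖∫ x, φ x • Φ x ξ ∂μ‖ ≤ δ * C * μ.real Q * ‖ξ‖ := by
  calc ‖∫ x, φ x • Φ x ξ ∂μ‖ ≤ ∫ x, Q.indicator (fun _ => δ * (C * ‖ξ‖)) x ∂μ :=
        norm_integral_le_of_norm_le ((integrable_indicator_iff hQ).2 (integrableOn_const hQμ))
          (Eventually.of_forall fun x => ?_)
    _ = δ * C * μ.real Q * ‖ξ‖ := by
        rw [integral_indicator_const _ hQ, smul_eq_mul]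
        ring
  by_cases hx : x ∈ Q
  · have hΦξ := (Φ x).le_of_opNorm_le (hΦ x hx) ξ
    rw [indicator_of_mem hx, norm_smul, Real.norm_eq_abs]
    exact mul_le_mul (hφ x) hΦξ (norm_nonneg _) ((abs_nonneg _).trans (hφ x))
  · have : φ x = 0 := notMem_support.1 fun h => hx (hφQ h)
    simp [this, indicator_of_notMem hx]

variable [TopologicalSpace α] [OpensMeasurableSpace α] [IsFiniteMeasureOnCompacts μ]
  {Φ : α → StrongDual 𝕜 E} {ψ : α → ℝ}

theorem HasCompactSupport.integrable_smul_apply (hψs : HasCompactSupport ψ)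
    (hψ : Continuous ψ) (hΦ : ∀ ξ, Continuous fun x => Φ x ξ) (ξ : E) :
    Integrable (fun x => ψ x • Φ x ξ) μ :=
  (hψ.smul (hΦ ξ)).integrable_of_hasCompactSupport hψs.smul_right

variable (μ) in
theorem exists_eq_integral_smul_apply [CompleteSpace E] (hΦ : ∀ ξ, Continuous fun x => Φ x ξ)
    (hψ : Continuous ψ) (hψs : HasCompactSupport ψ) :
    ∃ y : StrongDual 𝕜 E, ∀ ξ, y ξ = ∫ x, ψ x • Φ x ξ ∂μ := by
  have hint := hψs.integrable_smul_apply (μ := μ) hψ hΦ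
  obtain ⟨δ, hδ⟩ := hψ.bounded_above_of_compact_support hψs
  obtain ⟨C, -, hC⟩ := hψs.isCompact.exists_bound_of_continuous_apply hΦ
  let T : E →ₗ[𝕜] 𝕜 :=
    { toFun ξ := ∫ x, ψ x • Φ x ξ ∂μ
      map_add' ξ η := by
        simp only [map_add, smul_add]
        exact integral_add (hint ξ) (hint η)
      map_smul' c ξ := by
        simp only [map_smul, smul_comm (ψ _) c, RingHom.id_apply]
        exact integral_smul c _ }
  exact ⟨T.mkContinuous (δ * C * μ.real (tsupport ψ)) fun ξ =>
    norm_integral_smul_apply_le (isClosed_tsupport ψ).measurableSet hψs.isCompact.measure_ne_top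
      (subset_tsupport ψ) (fun x => by simpa using hδ x) hC ξ, fun ξ => rfl⟩

end WeakIntegral

section Representation

variable {G : Type*} [Group G] {X : Type*} [NormedAddCommGroup X] [NormedSpace ℂ X]
  {π : G →* (X ≃L[ℂ] X)}

variable (π) in
theorem map_mul_inv_apply (g h : G) (ξ : X) : π (g * h)⁻¹ ξ = π h⁻¹ (π g⁻¹ ξ) := by
  rw [mul_inv_rev, map_mul]
  rfl

theorem comp_apply_eq_integral_comp_inv_mul [MeasurableSpace G] [MeasurableMul G]
    {μ : Measure G} [μ.IsMulLeftInvariant] {ψ : G → ℝ} {x y : StrongDual ℂ X}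
    (hy : ∀ ξ, y ξ = ∫ g, ψ g • x (π g⁻¹ ξ) ∂μ) (h : G) (ξ : X) :
    y.comp (π h⁻¹ : X →L[ℂ] X) ξ = ∫ g, ψ (h⁻¹ * g) • x (π g⁻¹ ξ) ∂μ := by
  rw [← integral_mul_left_eq_self _ h]
  simp only [inv_mul_cancel_left, map_mul_inv_apply]
  exact hy _

variable [TopologicalSpace G]

theorem add_mem_contraSet {x y : StrongDual ℂ X} (hx : x ∈ contraSet π) (hy : y ∈ contraSet π) :
    x + y ∈ contraSet π :=
  (hx.add hy).congr fun _ => (ContinuousLinearMap.add_comp _ _ _).symm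

theorem smul_mem_contraSet (c : ℂ) {x : StrongDual ℂ X} (hx : x ∈ contraSet π) :
    c • x ∈ contraSet π :=
  (hx.const_smul c).congr fun _ => (ContinuousLinearMap.smul_comp _ _ _).symm

theorem comp_mem_contraSet [ContinuousMul G] (g : G) {x : StrongDual ℂ X}
    (hx : x ∈ contraSet π) : x.comp (π g⁻¹ : X →L[ℂ] X) ∈ contraSet π :=
  (hx.comp (continuous_mul_const g)).congr fun k =>
    ContinuousLinearMap.ext fun ξ => congrArg x (map_mul_inv_apply π k g ξ)

variable [IsTopologicalGroup G] [LocallyCompactSpace G] [CompleteSpace X]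

theorem isClosed_contraSet (hπ : ∀ ξ : X, Continuous fun g => π g ξ) : IsClosed (contraSet π) :=
  isClosed_setOf_continuous_comp fun g => by
    obtain ⟨V, hVc, hV⟩ := exists_compact_mem_nhds g
    obtain ⟨C, -, hC⟩ := hVc.exists_bound_of_continuous_apply
      (T := fun g => (π g⁻¹ : X →L[ℂ] X)) fun ξ => (hπ ξ).comp continuous_inv
    exact ⟨V, hV, C, hC⟩

theorem mem_contraSet_of_eq_integral [MeasurableSpace G] [BorelSpace G] {μ : Measure G}
    [μ.IsMulLeftInvariant] [IsFiniteMeasureOnCompacts μ] (hπ : ∀ ξ : X, Continuous fun g => π g ξ)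
    {ψ : G → ℝ} (hψ : Continuous ψ) (hψs : HasCompactSupport ψ) {x y : StrongDual ℂ X}
    (hy : ∀ ξ, y ξ = ∫ g, ψ g • x (π g⁻¹ ξ) ∂μ) : y ∈ contraSet π := by
  have hΦ : ∀ ξ, Continuous fun g => x.comp (π g⁻¹ : X →L[ℂ] X) ξ := fun ξ =>
    x.continuous.comp ((hπ ξ).comp continuous_inv)
  have hint (h : G) (ξ : X) : Integrable (fun g => ψ (h⁻¹ * g) • x (π g⁻¹ ξ)) μ :=
    HasCompactSupport.integrable_smul_apply (Φ := fun g => x.comp (π g⁻¹ : X →L[ℂ] X))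
      (ψ := fun g => ψ (h⁻¹ * g)) (hψs.comp_homeomorph (Homeomorph.mulLeft h⁻¹))
      (hψ.comp (continuous_const_mul _)) hΦ ξ
  refine continuous_iff_continuousAt.2 fun h₀ => Metric.tendsto_nhds.2 fun ε hε => ?_
  obtain ⟨V, hVc, hV⟩ := exists_compact_mem_nhds h₀
  set Q := closure (V * tsupport ψ)
  have hQ : IsCompact Q := (hVc.mul hψs.isCompact).closure
  have hsupp : ∀ h ∈ V, support (fun g => ψ (h⁻¹ * g)) ⊆ Q := fun h hh g hg =>
    subset_closure ⟨h, hh, h⁻¹ * g, subset_tsupport _ hg, mul_inv_cancel_left h g⟩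
  obtain ⟨C, hC0, hC⟩ := hQ.exists_bound_of_continuous_apply hΦ
  obtain ⟨δ, hδ, hδε⟩ := exists_pos_mul_lt hε (C * μ.real Q)
  filter_upwards [Metric.tendstoUniformly_iff.1 (hψs.tendstoUniformly_comp_inv_mul hψ h₀) δ hδ,
    hV] with h hδh hh
  have hdiff : ∀ ξ, (y.comp (π h⁻¹ : X →L[ℂ] X) - y.comp (π h₀⁻¹ : X →L[ℂ] X)) ξ =
      ∫ g, (ψ (h⁻¹ * g) - ψ (h₀⁻¹ * g)) • x (π g⁻¹ ξ) ∂μ := fun ξ => by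
    simp only [sub_apply, comp_apply_eq_integral_comp_inv_mul hy, sub_smul]
    exact (integral_sub (hint h ξ) (hint h₀ ξ)).symm
  have hbound : ∀ ξ, ‖(y.comp (π h⁻¹ : X →L[ℂ] X) - y.comp (π h₀⁻¹ : X →L[ℂ] X)) ξ‖ ≤
      δ * C * μ.real Q * ‖ξ‖ := fun ξ => by
    rw [hdiff]
    refine norm_integral_smul_apply_le (Φ := fun g => x.comp (π g⁻¹ : X →L[ℂ] X))
      isClosed_closure.measurableSet hQ.measure_ne_top ?_ (fun g => ?_) hC ξ
    · exact (support_sub _ _).trans (union_subset (hsupp h hh) (hsupp h₀ (mem_of_mem_nhds hV)))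
    · rw [abs_sub_comm, ← Real.dist_eq]
      exact (hδh g).le
  rw [dist_eq_norm]
  calc _ ≤ δ * C * μ.real Q := ContinuousLinearMap.opNorm_le_bound _ (by positivity) hbound
    _ < ε := by linarith

theorem exists_mem_contraSet_forall_norm_sub_le (hπ : ∀ ξ : X, Continuous fun g => π g ξ)
    (x : StrongDual ℂ X) (s : Finset X) {ε : ℝ} (hε : 0 < ε) :
    ∃ y ∈ contraSet π, ∀ ξ ∈ s, ‖y ξ - x ξ‖ ≤ ε := by
  borelize G
  have hΦ : ∀ ξ, Continuous fun g => x.comp (π g⁻¹ : X →L[ℂ] X) ξ := fun ξ =>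
    x.continuous.comp ((hπ ξ).comp continuous_inv)
  have hU : {g : G | ∀ ξ ∈ s, ‖x (π g⁻¹ ξ) - x ξ‖ ≤ ε} ∈ 𝓝 1 := by
    refine (Finset.eventually_all s).2 fun ξ _ => ?_
    have hlim := (hΦ ξ).tendsto 1
    simp only [inv_one, map_one] at hlim
    simpa [dist_eq_norm] using hlim.eventually (Metric.closedBall_mem_nhds _ hε)
  obtain ⟨ψ, hψ, hψs, hψ0, hψU, hψ1⟩ :=
    exists_continuous_hasCompactSupport_integral_eq_one Measure.haar hU
  obtain ⟨y, hy⟩ := exists_eq_integral_smul_apply Measure.haar hΦ hψ hψs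
  refine ⟨y, mem_contraSet_of_eq_integral hπ hψ hψs hy, fun ξ hξ => ?_⟩
  rw [hy]
  exact norm_integral_smul_sub_le hψ0 (hψ.integrable_of_hasCompactSupport hψs) hψ1
    (hψs.integrable_smul_apply hψ hΦ ξ) fun g hg => hψU hg ξ hξ

end Representation

end

/-- for a strongly continuous representation `π` of a locally compact group `G`
on a Banach space `X`, the set `Y` of functionals `x ∈ X*` for which `g ↦ π(g⁻¹)* x` is
norm-continuous is a norm-closed subspace of `X*`, invariant under all `π(g⁻¹)*`, and
weak-* dense in `X*`. -/
theorem stmt4 {G : Type*} [Group G] [TopologicalSpace G] [IsTopologicalGroup G]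
    [LocallyCompactSpace G]
    {X : Type*} [NormedAddCommGroup X] [NormedSpace ℂ X] [CompleteSpace X]
    (π : G →* (X ≃L[ℂ] X)) (hcont : ∀ ξ : X, Continuous fun g => π g ξ) :
    IsClosed (contraSet π) ∧
    (∀ x ∈ contraSet π, ∀ y ∈ contraSet π, x + y ∈ contraSet π) ∧
    (∀ c : ℂ, ∀ x ∈ contraSet π, c • x ∈ contraSet π) ∧
    (∀ g : G, ∀ x ∈ contraSet π, x.comp ((π g⁻¹ : X ≃L[ℂ] X) : X →L[ℂ] X) ∈ contraSet π) ∧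
    Dense (StrongDual.toWeakDual '' contraSet π) :=
  ⟨isClosed_contraSet hcont, fun _ hx _ hy => add_mem_contraSet hx hy,
    fun c _ hx => smul_mem_contraSet c hx, fun g _ hx => comp_mem_contraSet g hx,
    dense_toWeakDual_image_of_forall_finset fun x s _ hε =>
      exists_mem_contraSet_forall_norm_sub_le hcont x s hε⟩
end

section
/- Let P_n denote the n-th Legendre polynomial normalized by P_n(1) = 1. There is a constant C (one may take C = 4) such that for all n ≥ 0 and all δ ∈ [−1,1], |P_n(0) − P_n(δ)| ≤ C·|δ|^{1/2}. -/
/-!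
Laplace's integral `π P_n(x) = ∫_0^π (x + i √(1 - x²) cos φ)^n dφ` holds because the right side
satisfies the three-term recurrence: `i √(1 - x²) sin φ (x + i √(1 - x²) cos φ)^(n+1)` vanishes at
`0` and `π`, and its derivative is the recurrence's combination of the integrands. The integrand
has modulus `(1 - (1 - x²) sin² φ)^(n/2) ≤ exp(-n (1 - x²) sin² φ / 2)`, so `|P_n| ≤ 1`, and for
`|x| ≤ 1/4` a comparison with a Gaussian (Jordan's inequality) gives `|P_n(x)| ≲ 1/√n`. The
mean value bound `|a^n - b^n| ≤ n |a - b| max(|a|, |b|)^(n-1)` gives in the same way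
`|P_n(0) - P_n(δ)| ≲ √n |δ|`. The smaller of the two bounds is at most their geometric mean,
of order `√|δ|`; for `|δ| ≥ 1/4` the bound `|P_n| ≤ 1` suffices.
-/

/-- The Legendre polynomials, normalized by `P n 1 = 1`, defined by the recurrence
`(n+1) P_{n+1}(x) = (2n+1) x P_n(x) − n P_{n−1}(x)`, `P_0 = 1`, `P_1(x) = x`. -/
noncomputable def legendreP : ℕ → ℝ → ℝ
  | 0, _ => 1
  | 1, x => x
  | n + 2, x =>
      ((2 * (n : ℝ) + 3) * x * legendreP (n + 1) x - ((n : ℝ) + 1) * legendreP n x)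
        / ((n : ℝ) + 2)

open Real intervalIntegral

theorem norm_pow_sub_pow_le {R : Type*} [NormedRing R] [NormOneClass R] (a b : R) (n : ℕ) :
    ‖a ^ n - b ^ n‖ ≤ ‖a - b‖ * n * max ‖a‖ ‖b‖ ^ (n - 1) := by
  set M := max ‖a‖ ‖b‖
  induction n with
  | zero => simp
  | succ n ih =>
    have hM : M * (‖a - b‖ * n * M ^ (n - 1)) = ‖a - b‖ * n * M ^ n := by
      rcases n with _ | n
      · simp
      · simp only [Nat.add_sub_cancel, pow_succ]; ring
    calc ‖a ^ (n + 1) - b ^ (n + 1)‖ = ‖a * (a ^ n - b ^ n) + (a - b) * b ^ n‖ := by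
          rw [pow_succ', pow_succ']; noncomm_ring
      _ ≤ ‖a‖ * ‖a ^ n - b ^ n‖ + ‖a - b‖ * ‖b‖ ^ n :=
          norm_add_le_of_le (norm_mul_le _ _)
            ((norm_mul_le _ _).trans (by gcongr; exact norm_pow_le _ _))
      _ ≤ M * (‖a - b‖ * n * M ^ (n - 1)) + ‖a - b‖ * M ^ n := by
          gcongr
          · exact le_max_left _ _
          · exact le_max_right _ _
      _ = ‖a - b‖ * ↑(n + 1) * M ^ (n + 1 - 1) := by
          rw [hM, Nat.add_sub_cancel]; push_cast; ring

theorem min_le_sqrt_mul {a b : ℝ} (ha : 0 ≤ a) (hb : 0 ≤ b) : min a b ≤ √(a * b) :=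
  Real.le_sqrt_of_sq_le
    (by rw [sq]; exact mul_le_mul (min_le_left a b) (min_le_right a b) (le_min ha hb) ha)

noncomputable def laplaceKernel (x φ : ℝ) : ℂ :=
  x + ((√(1 - x ^ 2) * cos φ : ℝ) : ℂ) * Complex.I

noncomputable def laplaceIntegral (n : ℕ) (x : ℝ) : ℂ :=
  ∫ φ in (0)..π, laplaceKernel x φ ^ n

@[fun_prop]
theorem continuous_laplaceKernel (x : ℝ) : Continuous (laplaceKernel x) := by
  unfold laplaceKernel; fun_prop

theorem hasDerivAt_laplaceKernel (x φ : ℝ) :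
    HasDerivAt (laplaceKernel x) (((-(√(1 - x ^ 2) * sin φ)) : ℝ) * Complex.I) φ := by
  have hcos := ((hasDerivAt_cos φ).const_mul √(1 - x ^ 2)).ofReal_comp
  rw [mul_neg] at hcos
  exact (hcos.mul_const Complex.I).const_add (x : ℂ)

theorem hasDerivAt_sin_mul_laplaceKernel_pow {x : ℝ} (hx : x ^ 2 ≤ 1) (n : ℕ) (φ : ℝ) :
    HasDerivAt (fun φ ↦ Complex.I * √(1 - x ^ 2) * sin φ * laplaceKernel x φ ^ (n + 1))
      ((n + 2) * laplaceKernel x φ ^ (n + 2) - (2 * n + 3) * x * laplaceKernel x φ ^ (n + 1)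
        + (n + 1) * laplaceKernel x φ ^ n) φ := by
  have hsin := ((hasDerivAt_sin φ).ofReal_comp).const_mul (Complex.I * √(1 - x ^ 2))
  refine (hsin.mul ((hasDerivAt_laplaceKernel x φ).pow (n + 1))).congr_deriv ?_
  have hs : ((√(1 - x ^ 2) : ℝ) : ℂ) ^ 2 = 1 - x ^ 2 := by
    rw [← Complex.ofReal_pow, Real.sq_sqrt (by linarith)]; push_cast; ring
  have hsc : ((sin φ : ℝ) : ℂ) ^ 2 + ((cos φ : ℝ) : ℂ) ^ 2 = 1 := by
    exact_mod_cast sin_sq_add_cos_sq φ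
  simp only [Pi.pow_apply, laplaceKernel, Complex.ofReal_mul, Complex.ofReal_neg,
    Nat.add_sub_cancel, Nat.cast_add, Nat.cast_one]
  set s : ℂ := ((√(1 - x ^ 2) : ℝ) : ℂ)
  set c : ℂ := ((cos φ : ℝ) : ℂ)
  linear_combination (-(n + 1) * ((x : ℂ) + s * c * Complex.I) ^ n) *
    (Complex.I ^ 2 * s ^ 2 * hsc + Complex.I ^ 2 * hs + (1 - (x : ℂ) ^ 2) * Complex.I_sq)

theorem laplaceIntegral_recurrence {x : ℝ} (hx : x ^ 2 ≤ 1) (n : ℕ) :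
    (n + 2) * laplaceIntegral (n + 2) x
      = (2 * n + 3) * x * laplaceIntegral (n + 1) x - (n + 1) * laplaceIntegral n x := by
  have hint : ∀ m, IntervalIntegrable (fun φ ↦ laplaceKernel x φ ^ m) MeasureTheory.volume 0 π :=
    fun m ↦ (by fun_prop : Continuous _).intervalIntegrable _ _
  have hFTC := integral_eq_sub_of_hasDerivAt
    (fun φ _ ↦ hasDerivAt_sin_mul_laplaceKernel_pow hx n φ)
    (((((hint _).const_mul _).sub ((hint _).const_mul _)).add ((hint _).const_mul _)))
  rw [integral_add (((hint _).const_mul _).sub ((hint _).const_mul _)) ((hint _).const_mul _),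
    integral_sub ((hint _).const_mul _) ((hint _).const_mul _), integral_const_mul,
    integral_const_mul, integral_const_mul] at hFTC
  simp only [sin_pi, sin_zero, Complex.ofReal_zero, mul_zero, zero_mul, sub_zero] at hFTC
  unfold laplaceIntegral
  linear_combination hFTC

theorem laplaceIntegral_zero (x : ℝ) : laplaceIntegral 0 x = π := by
  simp [laplaceIntegral]

theorem laplaceIntegral_one (x : ℝ) : laplaceIntegral 1 x = π * x := by
  have hcos : ∫ φ in (0)..π, ((√(1 - x ^ 2) * cos φ : ℝ) : ℂ) * Complex.I = 0 := by
    rw [integral_mul_const, integral_ofReal, integral_const_mul, integral_cos]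
    simp
  simp only [laplaceIntegral, pow_one, laplaceKernel]
  rw [integral_add intervalIntegrable_const ((by fun_prop : Continuous _).intervalIntegrable _ _),
    hcos]
  simp

theorem laplaceIntegral_eq {x : ℝ} (hx : x ^ 2 ≤ 1) (n : ℕ) :
    laplaceIntegral n x = π * legendreP n x := by
  induction n, x using legendreP.induct with
  | case1 x => simp [laplaceIntegral_zero, legendreP]
  | case2 x => simp [laplaceIntegral_one, legendreP]
  | case3 n x ih₁ ih₀ =>
    have hrec := laplaceIntegral_recurrence hx n
    rw [ih₁ hx, ih₀ hx] at hrec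
    rw [legendreP]
    have hn : (n : ℂ) + 2 ≠ 0 := by exact_mod_cast (by positivity : (n : ℝ) + 2 ≠ 0)
    push_cast
    field_simp
    linear_combination hrec

theorem norm_laplaceKernel_sq {x : ℝ} (hx : x ^ 2 ≤ 1) (φ : ℝ) :
    ‖laplaceKernel x φ‖ ^ 2 = 1 - (1 - x ^ 2) * sin φ ^ 2 := by
  rw [Complex.sq_norm, laplaceKernel, Complex.normSq_add_mul_I, mul_pow,
    Real.sq_sqrt (by linarith), cos_sq']
  ring

theorem norm_laplaceKernel_le_one {x : ℝ} (hx : x ^ 2 ≤ 1) (φ : ℝ) : ‖laplaceKernel x φ‖ ≤ 1 := by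
  have h := norm_laplaceKernel_sq hx φ
  rw [← abs_norm, ← sq_le_one_iff_abs_le_one, h]
  nlinarith [sq_nonneg (sin φ)]

theorem norm_laplaceKernel_zero_le {x : ℝ} (hx : x ^ 2 ≤ 1) (φ : ℝ) :
    ‖laplaceKernel 0 φ‖ ≤ ‖laplaceKernel x φ‖ := by
  rw [← abs_norm, ← abs_norm (laplaceKernel x φ), ← sq_le_sq, norm_laplaceKernel_sq hx,
    norm_laplaceKernel_sq (by norm_num)]
  nlinarith [sq_nonneg (sin φ), sq_nonneg x]

theorem norm_laplaceKernel_zero_sub_le {x : ℝ} (hx : x ^ 2 ≤ 1) (φ : ℝ) :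
    ‖laplaceKernel 0 φ - laplaceKernel x φ‖ ≤ |x| + x ^ 2 := by
  have hsqrt : 1 - x ^ 2 ≤ √(1 - x ^ 2) := by
    rw [Real.le_sqrt (by linarith) (by linarith)]
    nlinarith
  have hsqrt' : √(1 - x ^ 2) ≤ 1 := Real.sqrt_le_one.mpr (by linarith [sq_nonneg x])
  have hdiff : laplaceKernel 0 φ - laplaceKernel x φ
      = (-x : ℝ) + (((1 - √(1 - x ^ 2)) * cos φ : ℝ) : ℂ) * Complex.I := by
    simp [laplaceKernel]; ring
  rw [hdiff]
  refine (norm_add_le _ _).trans (add_le_add ?_ ?_)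
  · simp
  · rw [norm_mul, Complex.norm_I, mul_one, Complex.norm_real, Real.norm_eq_abs, abs_mul,
      abs_of_nonneg (by linarith)]
    exact (mul_le_of_le_one_right (by linarith) (abs_cos_le_one φ)).trans (by linarith)

theorem norm_laplaceKernel_le_exp {x : ℝ} (hx : x ^ 2 ≤ 1) (φ : ℝ) :
    ‖laplaceKernel x φ‖ ≤ exp (-((1 - x ^ 2) / 2) * sin φ ^ 2) := by
  rw [← abs_norm, ← abs_of_pos (exp_pos _), ← sq_le_sq, ← exp_nat_mul,
    norm_laplaceKernel_sq hx]
  calc 1 - (1 - x ^ 2) * sin φ ^ 2 ≤ exp (-(1 - x ^ 2) * sin φ ^ 2) := by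
        linarith [add_one_le_exp (-(1 - x ^ 2) * sin φ ^ 2)]
    _ = exp (2 * (-((1 - x ^ 2) / 2) * sin φ ^ 2)) := by ring_nf

theorem integral_exp_neg_mul_sin_sq_le {l : ℝ} (hl : 0 < l) :
    ∫ φ in (0)..π, exp (-l * sin φ ^ 2) ≤ 3 / √l := by
  have hint : ∀ a b : ℝ,
      IntervalIntegrable (fun φ ↦ exp (-l * sin φ ^ 2)) MeasureTheory.volume a b :=
    fun a b ↦ (by fun_prop : Continuous _).intervalIntegrable a b
  have hsymm : ∫ φ in (π / 2)..π, exp (-l * sin φ ^ 2)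
      = ∫ φ in (0)..(π / 2), exp (-l * sin φ ^ 2) := by
    have := integral_comp_sub_left (a := 0) (b := π / 2) (fun φ ↦ exp (-l * sin φ ^ 2)) π
    simp only [sin_pi_sub] at this
    rw [this]
    norm_num [show π - π / 2 = π / 2 by ring]
  have hjordan : ∫ φ in (0)..(π / 2), exp (-l * sin φ ^ 2)
      ≤ ∫ φ in (0)..(π / 2), exp (-(4 * l / π ^ 2) * φ ^ 2) := by
    refine integral_mono_on (by positivity) (hint _ _)
      ((by fun_prop : Continuous _).intervalIntegrable _ _) fun φ ⟨h0, h1⟩ ↦ exp_le_exp.mpr ?_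
    have hsin : (2 / π * φ) ^ 2 ≤ sin φ ^ 2 := pow_le_pow_left₀ (by positivity) (mul_le_sin h0 h1) 2
    have : 4 * l / π ^ 2 * φ ^ 2 = l * (2 / π * φ) ^ 2 := by field_simp; ring
    nlinarith
  have hgauss : ∫ φ in (0)..(π / 2), exp (-(4 * l / π ^ 2) * φ ^ 2)
      ≤ √(π / (4 * l / π ^ 2)) / 2 := by
    rw [integral_of_le (by positivity), ← integral_gaussian_Ioi]
    exact MeasureTheory.setIntegral_mono_set
      (integrable_exp_neg_mul_sq (by positivity)).integrableOn
      (.of_forall fun _ ↦ (exp_pos _).le) (.of_forall Set.Ioc_subset_Ioi_self)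
  have hconst : √(π / (4 * l / π ^ 2)) ≤ 3 / √l := by
    rw [show π / (4 * l / π ^ 2) = π ^ 3 / 4 / l by field_simp, Real.sqrt_div' _ hl.le]
    gcongr
    rw [Real.sqrt_le_left (by norm_num)]
    nlinarith [pi_lt_d2, pi_pos]
  rw [← integral_add_adjacent_intervals (hint 0 (π / 2)) (hint _ _), hsymm]
  linarith

theorem integral_norm_laplaceKernel_pow_le {x : ℝ} (hx : x ^ 2 ≤ 1 / 16) (m : ℕ) :
    ∫ φ in (0)..π, ‖laplaceKernel x φ‖ ^ m ≤ 25 / 4 / √(m + 1) := by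
  rcases Nat.eq_zero_or_pos m with rfl | hm
  · simp only [pow_zero, integral_const, sub_zero, smul_eq_mul, mul_one, Nat.cast_zero, zero_add,
      Real.sqrt_one, div_one]
    linarith [pi_lt_four]
  -- `l` is chosen so that `√l = 12/25 * √(m+1)` and, for `m ≥ 1`, `l ≤ m (1 - x^2) / 2`.
  set l : ℝ := (12 / 25) ^ 2 * (m + 1)
  have hm1 : (1 : ℝ) ≤ m := by exact_mod_cast hm
  have hpow : ∀ φ, ‖laplaceKernel x φ‖ ^ m ≤ exp (-l * sin φ ^ 2) := fun φ ↦ calc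
    ‖laplaceKernel x φ‖ ^ m ≤ exp (-((1 - x ^ 2) / 2) * sin φ ^ 2) ^ m :=
      pow_le_pow_left₀ (norm_nonneg _) (norm_laplaceKernel_le_exp (by linarith) φ) m
    _ = exp (-(m * (1 - x ^ 2) / 2) * sin φ ^ 2) := by rw [← exp_nat_mul]; ring_nf
    _ ≤ exp (-l * sin φ ^ 2) := by
      gcongr
      show (12 / 25) ^ 2 * ((m : ℝ) + 1) ≤ m * (1 - x ^ 2) / 2
      nlinarith
  calc ∫ φ in (0)..π, ‖laplaceKernel x φ‖ ^ m ≤ ∫ φ in (0)..π, exp (-l * sin φ ^ 2) :=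
        integral_mono_on pi_pos.le ((by fun_prop : Continuous _).intervalIntegrable _ _)
          ((by fun_prop : Continuous _).intervalIntegrable _ _) fun φ _ ↦ hpow φ
    _ ≤ 3 / √l := integral_exp_neg_mul_sin_sq_le (by positivity)
    _ = 25 / 4 / √(m + 1) := by
      rw [Real.sqrt_mul (by positivity), Real.sqrt_sq (by norm_num)]
      field_simp
      norm_num

theorem abs_legendreP_le_integral {x : ℝ} (hx : x ^ 2 ≤ 1) (n : ℕ) :
    |legendreP n x| ≤ (∫ φ in (0)..π, ‖laplaceKernel x φ‖ ^ n) / π := by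
  have h : π * |legendreP n x| = ‖laplaceIntegral n x‖ := by
    rw [laplaceIntegral_eq hx, norm_mul, Complex.norm_real, Complex.norm_real, Real.norm_eq_abs,
      Real.norm_eq_abs, abs_of_pos pi_pos]
  rw [le_div_iff₀ pi_pos, mul_comm, h, laplaceIntegral]
  exact (norm_integral_le_integral_norm pi_pos.le).trans_eq (by simp only [norm_pow])

theorem abs_legendreP_sub_le_integral {x y : ℝ} (hx : x ^ 2 ≤ 1) (hy : y ^ 2 ≤ 1) (n : ℕ) :
    |legendreP n x - legendreP n y|
      ≤ (∫ φ in (0)..π, ‖laplaceKernel x φ ^ n - laplaceKernel y φ ^ n‖) / π := by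
  have h : π * |legendreP n x - legendreP n y| = ‖laplaceIntegral n x - laplaceIntegral n y‖ := by
    rw [laplaceIntegral_eq hx, laplaceIntegral_eq hy, ← mul_sub, ← Complex.ofReal_sub, norm_mul,
      Complex.norm_real, Complex.norm_real, Real.norm_eq_abs, Real.norm_eq_abs, abs_of_pos pi_pos]
  rw [le_div_iff₀ pi_pos, mul_comm, h, laplaceIntegral, laplaceIntegral,
    ← integral_sub ((by fun_prop : Continuous _).intervalIntegrable _ _)
      ((by fun_prop : Continuous _).intervalIntegrable _ _)]
  exact norm_integral_le_integral_norm pi_pos.le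

theorem abs_legendreP_le_one {x : ℝ} (hx : x ^ 2 ≤ 1) (n : ℕ) : |legendreP n x| ≤ 1 := by
  refine (abs_legendreP_le_integral hx n).trans ((div_le_one pi_pos).mpr ?_)
  calc ∫ φ in (0)..π, ‖laplaceKernel x φ‖ ^ n ≤ ∫ _ in (0)..π, (1 : ℝ) :=
        integral_mono_on pi_pos.le ((by fun_prop : Continuous _).intervalIntegrable _ _)
          intervalIntegrable_const
          fun φ _ ↦ pow_le_one₀ (norm_nonneg _) (norm_laplaceKernel_le_one hx φ)
    _ = π := by simp

theorem abs_legendreP_le_two_div_sqrt {x : ℝ} (hx : x ^ 2 ≤ 1 / 16) (n : ℕ) :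
    |legendreP n x| ≤ 2 / √(n + 1) := by
  refine (abs_legendreP_le_integral (by linarith) n).trans ?_
  rw [div_le_iff₀ pi_pos]
  calc ∫ φ in (0)..π, ‖laplaceKernel x φ‖ ^ n ≤ 25 / 4 / √(n + 1) :=
        integral_norm_laplaceKernel_pow_le hx n
    _ ≤ 2 / √(n + 1) * π := by
      rw [div_mul_eq_mul_div]
      gcongr
      linarith [pi_gt_d2]

theorem abs_legendreP_zero_sub_le_sqrt_mul {δ : ℝ} (hδ : δ ^ 2 ≤ 1 / 16) (n : ℕ) :
    |legendreP n 0 - legendreP n δ| ≤ 4 * (√n * |δ|) := by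
  rcases Nat.eq_zero_or_pos n with rfl | hn
  · simp [legendreP]
  have hδ1 : δ ^ 2 ≤ 1 := by linarith
  have hδabs : |δ| + δ ^ 2 ≤ 5 / 4 * |δ| := by nlinarith [sq_abs δ, abs_nonneg δ]
  have hpoint : ∀ φ, ‖laplaceKernel 0 φ ^ n - laplaceKernel δ φ ^ n‖
      ≤ (|δ| + δ ^ 2) * n * ‖laplaceKernel δ φ‖ ^ (n - 1) := fun φ ↦ by
    refine (norm_pow_sub_pow_le _ _ n).trans ?_
    rw [max_eq_right (norm_laplaceKernel_zero_le hδ1 φ)]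
    gcongr
    exact norm_laplaceKernel_zero_sub_le hδ1 φ
  have hcast : ((n - 1 : ℕ) : ℝ) + 1 = n := by rw [Nat.cast_sub hn, Nat.cast_one]; ring
  have hint := integral_norm_laplaceKernel_pow_le hδ (n - 1)
  rw [hcast] at hint
  refine (abs_legendreP_sub_le_integral (by norm_num) hδ1 n).trans ?_
  rw [div_le_iff₀ pi_pos]
  calc ∫ φ in (0)..π, ‖laplaceKernel 0 φ ^ n - laplaceKernel δ φ ^ n‖
      ≤ ∫ φ in (0)..π, (|δ| + δ ^ 2) * n * ‖laplaceKernel δ φ‖ ^ (n - 1) :=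
        integral_mono_on pi_pos.le ((by fun_prop : Continuous _).intervalIntegrable _ _)
          ((by fun_prop : Continuous _).intervalIntegrable _ _) fun φ _ ↦ hpoint φ
    _ ≤ 5 / 4 * |δ| * n * (25 / 4 / √n) := by
      rw [integral_const_mul]
      gcongr
      exact integral_nonneg pi_pos.le fun φ _ ↦ by positivity
    _ = 125 / 16 * (n / √n * |δ|) := by ring
    _ = 125 / 16 * (√n * |δ|) := by rw [Real.div_sqrt]
    _ ≤ 4 * (√n * |δ|) * π := by
      nlinarith [pi_gt_three, mul_nonneg (Real.sqrt_nonneg n) (abs_nonneg δ)]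

theorem abs_legendreP_zero_sub_le {δ : ℝ} (hδ : δ ^ 2 ≤ 1 / 16) (n : ℕ) :
    |legendreP n 0 - legendreP n δ| ≤ 4 * √|δ| := by
  have hdecay : |legendreP n 0 - legendreP n δ| ≤ 4 * (1 / √(n + 1)) := calc
    _ ≤ |legendreP n 0| + |legendreP n δ| := abs_sub _ _
    _ ≤ 2 / √(n + 1) + 2 / √(n + 1) :=
      add_le_add (abs_legendreP_le_two_div_sqrt (by norm_num) n)
        (abs_legendreP_le_two_div_sqrt hδ n)
    _ = 4 * (1 / √(n + 1)) := by ring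
  calc |legendreP n 0 - legendreP n δ| ≤ 4 * min (√n * |δ|) (1 / √(n + 1)) := by
        rw [mul_min_of_nonneg _ _ (by norm_num)]
        exact le_min (abs_legendreP_zero_sub_le_sqrt_mul hδ n) hdecay
    _ ≤ 4 * √(√n * |δ| * (1 / √(n + 1))) := by
        gcongr
        exact min_le_sqrt_mul (by positivity) (by positivity)
    _ ≤ 4 * √|δ| := by
        gcongr
        rw [mul_one_div, mul_div_right_comm]
        refine mul_le_of_le_one_left (abs_nonneg δ) ((div_le_one (by positivity)).mpr ?_)
        gcongr
        linarith

/-- there is a constant `C` (one may take `C = 4`) such that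
`|P_n(0) − P_n(δ)| ≤ C |δ|^{1/2}` for all `n ≥ 0` and all `δ ∈ [−1,1]`. -/
theorem stmt11 :
    ∃ C : ℝ, C = 4 ∧ ∀ (n : ℕ), ∀ δ ∈ Set.Icc (-1 : ℝ) 1,
      |legendreP n 0 - legendreP n δ| ≤ C * Real.sqrt |δ| := by
  refine ⟨4, rfl, fun n δ hδ ↦ ?_⟩
  rcases lt_or_ge |δ| (1 / 4) with hsmall | hlarge
  · exact abs_legendreP_zero_sub_le (by nlinarith [sq_abs δ, abs_nonneg δ]) n
  have hδ1 : δ ^ 2 ≤ 1 := sq_le_one_iff_abs_le_one δ |>.mpr (abs_le.mpr hδ)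
  calc |legendreP n 0 - legendreP n δ| ≤ |legendreP n 0| + |legendreP n δ| := abs_sub _ _
    _ ≤ 1 + 1 := add_le_add (abs_legendreP_le_one (by norm_num) n) (abs_legendreP_le_one hδ1 n)
    _ = 4 * √(1 / 4) := by
      rw [show (1 / 4 : ℝ) = (1 / 2) ^ 2 by norm_num, Real.sqrt_sq (by norm_num)]
      norm_num
    _ ≤ 4 * √|δ| := by gcongr
end
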